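/- For any ε > 0, any w ∈ ℝ^L, and any j, k ∈ [L], if w_j ≤ w_k and j ∈ argmax^ε(w), then k ∈ argmax^ε(w). -/

import Mathlib

noncomputable section

/-- The set `R_j^ε = {w ∈ ℝ^L : w_j ≥ max_{ℓ≠j} w_ℓ + ε/√2}`. -/
def Rset (L : ℕ) (ε : ℝ) (j : Fin L) : Set (EuclideanSpace ℝ (Fin L)) :=
  {w | ∀ ℓ : Fin L, ℓ ≠ j → w ℓ + ε / Real.sqrt 2 ≤ w j}

/-- The inflated argmax: `argmax^ε(w) = {j ∈ [L] : dist(w, R_j^ε) < ε}`. -/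
def inflatedArgmax (L : ℕ) (ε : ℝ) (w : EuclideanSpace ℝ (Fin L)) : Set (Fin L) :=
  {j | Metric.infDist w (Rset L ε j) < ε}

/-!
Swapping the coordinates `j` and `k` is an isometry of `ℝ^L` carrying `R_j^ε` onto `R_k^ε`.
Every `v ∈ R_j^ε` has `v_k ≤ v_j`, so when `w_j ≤ w_k` the rearrangement inequality shows that the
swapped point is at least as close to `w` as `v`. Hence `dist(w, R_k^ε) ≤ dist(w, R_j^ε)`.
-/

namespace EuclideanSpace

variable {ι : Type*} [Fintype ι] [DecidableEq ι]

def swapCoords (j k : ι) : EuclideanSpace ℝ ι ≃ₗᵢ[ℝ] EuclideanSpace ℝ ι :=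
  LinearIsometryEquiv.piLpCongrLeft 2 ℝ ℝ (Equiv.swap j k)

@[simp]
theorem swapCoords_apply (j k : ι) (v : EuclideanSpace ℝ ι) (i : ι) :
    swapCoords j k v i = v (Equiv.swap j k i) := by
  simp [swapCoords, LinearIsometryEquiv.piLpCongrLeft_apply, Equiv.piCongrLeft'_apply]

theorem inner_swapCoords_sub_inner {j k : ι} (hjk : j ≠ k) (w v : EuclideanSpace ℝ ι) :
    inner ℝ w (swapCoords j k v) - inner ℝ w v = (w k - w j) * (v j - v k) := by
  rw [PiLp.inner_apply, PiLp.inner_apply, ← Finset.sum_sub_distrib,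
    Fintype.sum_eq_add j k hjk fun i ⟨hij, hik⟩ => by simp [Equiv.swap_apply_of_ne_of_ne hij hik]]
  simp only [swapCoords_apply, Equiv.swap_apply_left, Equiv.swap_apply_right, RCLike.inner_apply,
    conj_trivial]
  ring

theorem dist_swapCoords_le {j k : ι} (w v : EuclideanSpace ℝ ι) (hw : w j ≤ w k) (hv : v k ≤ v j) :
    dist w (swapCoords j k v) ≤ dist w v := by
  rcases eq_or_ne j k with rfl | hjk
  · rw [show swapCoords j j v = v by ext; simp]
  have hinner := inner_swapCoords_sub_inner hjk w v
  have hsq : ‖w - swapCoords j k v‖ ^ 2 ≤ ‖w - v‖ ^ 2 := by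
    rw [norm_sub_sq_real, norm_sub_sq_real, LinearIsometryEquiv.norm_map]
    nlinarith [mul_nonneg (sub_nonneg.2 hw) (sub_nonneg.2 hv)]
  rw [dist_eq_norm, dist_eq_norm]
  exact (pow_le_pow_iff_left₀ (norm_nonneg _) (norm_nonneg _) two_ne_zero).1 hsq

end EuclideanSpace

open EuclideanSpace

theorem Rset_nonempty (L : ℕ) (ε : ℝ) (j : Fin L) : (Rset L ε j).Nonempty :=
  ⟨EuclideanSpace.single j (ε / Real.sqrt 2), fun ℓ hℓ => by simp [hℓ]⟩

theorem le_of_mem_Rset {L : ℕ} {ε : ℝ} (hε : 0 ≤ ε) {j ℓ : Fin L} {v : EuclideanSpace ℝ (Fin L)}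
    (hv : v ∈ Rset L ε j) (hℓ : ℓ ≠ j) : v ℓ ≤ v j := by
  linarith [hv ℓ hℓ, (by positivity : 0 ≤ ε / Real.sqrt 2)]

theorem swapCoords_mem_Rset {L : ℕ} {ε : ℝ} {j : Fin L} (k : Fin L) {v : EuclideanSpace ℝ (Fin L)}
    (hv : v ∈ Rset L ε j) : swapCoords j k v ∈ Rset L ε k := by
  intro ℓ hℓ
  have hℓ' : Equiv.swap j k ℓ ≠ j := by rwa [Ne, Equiv.swap_apply_eq_iff, Equiv.swap_apply_left]
  simpa using hv _ hℓ'

theorem inflatedArgmax_mono_coord_general (L : ℕ) (ε : ℝ) (hε : 0 < ε)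
    (w : EuclideanSpace ℝ (Fin L)) (j k : Fin L) (hjk : w j ≤ w k)
    (hj : j ∈ inflatedArgmax L ε w) :
    k ∈ inflatedArgmax L ε w := by
  rcases eq_or_ne j k with rfl | hne
  · exact hj
  obtain ⟨v, hv, hdist⟩ := (Metric.infDist_lt_iff (Rset_nonempty L ε j)).1 hj
  calc Metric.infDist w (Rset L ε k) ≤ dist w (swapCoords j k v) :=
        Metric.infDist_le_dist_of_mem (swapCoords_mem_Rset k hv)
    _ ≤ dist w v := dist_swapCoords_le w v hjk (le_of_mem_Rset hε.le hv hne.symm)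
    _ < ε := hdist

/-- Monotonicity of the inflated argmax in `w`: if `w_j ≤ w_k` and
`j ∈ argmax^ε(w)`, then `k ∈ argmax^ε(w)`. -/
theorem inflatedArgmax_mono_coord (L : ℕ) (hL : 2 ≤ L) (ε : ℝ) (hε : 0 < ε)
    (w : EuclideanSpace ℝ (Fin L)) (j k : Fin L) (hjk : w j ≤ w k)
    (hj : j ∈ inflatedArgmax L ε w) :
    k ∈ inflatedArgmax L ε w :=
  inflatedArgmax_mono_coord_general L ε hε w j k hjk hj
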